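/- arXiv:0812.3962 — 4 statements merged into one kernel-verified Lean document; each statement's English description precedes it below -/
import Mathlib

section
/- The number of Γ₀(N)-inequivalent cusps of Γ₀(N) equals ∑_{e | N, e > 0} φ(gcd(e, N/e)), where φ is Euler's totient function. -/
open scoped MatrixGroups
open Matrix

/-- A point of `P¹(ℚ)`, modeled as a primitive integral vector (a coprime pair). -/
def PrimVec : Type := {v : Fin 2 → ℤ // IsCoprime (v 0) (v 1)}

/-- Two points of `P¹(ℚ)` are `Γ₀(N)`-equivalent if some element of `Γ₀(N)` maps one
to the other (up to sign, i.e. up to a unit scalar). -/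
def cuspRel (N : ℕ) (v w : PrimVec) : Prop :=
  ∃ γ ∈ CongruenceSubgroup.Gamma0 N, ∃ ε : ℤˣ,
    (γ : Matrix (Fin 2) (Fin 2) ℤ).mulVec v.1 = (ε : ℤ) • w.1

/-!
A cusp `p/q` with `gcd(p, q) = 1` has two `Γ₀(N)`-invariants: the divisor `c = gcd(q, N)` of `N`
and the class of `p · (q/c)` in `(ℤ/gcd(c, N/c))ˣ`. Conversely, explicit matrices of `Γ₀(N)` move
every cusp to some `a/c` with `c ∣ N` and `gcd(a, c) = 1`, and identify `a/c` with `a'/c` whenever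
`a ≡ a' mod gcd(c, N/c)`. So the cusps are in bijection with the pairs `(c, unit mod gcd(c, N/c))`.
-/

namespace Int

theorem exists_modEq_isCoprime {m c y₀ : ℤ} (hc : c ≠ 0) (h : IsCoprime y₀ (gcd m c)) :
    ∃ y, y ≡ y₀ [ZMOD m] ∧ IsCoprime y c := by
  classical
  -- `k` is the product of the primes of `c` not dividing `y₀`; then no prime of `c`
  -- divides `y₀ + m * k`, because a prime dividing both `y₀` and `c` does not divide `m`.
  set k : ℤ := ∏ ℓ ∈ c.natAbs.primeFactors with ¬ ((ℓ : ℕ) : ℤ) ∣ y₀, (ℓ : ℤ)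
  refine ⟨y₀ + m * k, modEq_iff_dvd.mpr ⟨-k, by ring⟩,
    isCoprime_of_prime_dvd (by simp [hc]) fun z hz hzy hzc => ?_⟩
  by_cases hzy₀ : z ∣ y₀
  · rcases hz.dvd_or_dvd ((dvd_add_right hzy₀).mp hzy) with hzm | hzk
    · exact hz.not_isUnit (h.isUnit_of_dvd' hzy₀ (dvd_coe_gcd hzm hzc))
    · obtain ⟨ℓ, hℓ, hzℓ⟩ := (hz.dvd_finsetProd_iff _).mp hzk
      obtain ⟨hℓc, hℓy₀⟩ := Finset.mem_filter.mp hℓ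
      have hzℓ' : z.natAbs = ℓ := (Nat.prime_dvd_prime_iff_eq (prime_iff_natAbs_prime.mp hz)
        (Nat.prime_of_mem_primeFactors hℓc)).mp (by simpa using natAbs_dvd_natAbs.mpr hzℓ)
      exact hℓy₀ (hzℓ' ▸ natAbs_dvd.mpr hzy₀)
  · have hzk : z ∣ k := natAbs_dvd.mp <| Finset.dvd_prod_of_mem _ <| Finset.mem_filter.mpr
      ⟨Nat.mem_primeFactors.mpr ⟨prime_iff_natAbs_prime.mp hz, natAbs_dvd_natAbs.mpr hzc,
        natAbs_ne_zero.mpr hc⟩, fun hℓ => hzy₀ (natAbs_dvd.mp hℓ)⟩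
    exact hzy₀ ((dvd_add_left (hzk.mul_left m)).mp hzy)

theorem exists_mul_mul_modEq_of_gcd_dvd {c m u z : ℤ} (hu : IsCoprime u c)
    (hz : (gcd c m : ℤ) ∣ z) : ∃ g, m * g * u ≡ z [ZMOD c] := by
  obtain ⟨t, rfl⟩ := hz
  obtain ⟨w, s, hws⟩ := hu
  refine ⟨c.gcdB m * t * w, modEq_iff_dvd.mpr ⟨c.gcdA m * t + m * c.gcdB m * t * s, ?_⟩⟩
  linear_combination (gcd_eq_gcd_ab c m) * t - m * c.gcdB m * t * hws

end Int

theorem cuspRel_of_entries {N : ℕ} {v w : PrimVec} (a b c d : ℤ) (hdet : a * d - b * c = 1)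
    (hc : (N : ℤ) ∣ c) (h₀ : a * v.1 0 + b * v.1 1 = w.1 0)
    (h₁ : c * v.1 0 + d * v.1 1 = w.1 1) : cuspRel N v w := by
  refine ⟨⟨!![a, b; c, d], by simpa [det_fin_two_of] using hdet⟩, ?_, 1, ?_⟩
  · exact CongruenceSubgroup.Gamma0_mem.mpr ((ZMod.intCast_zmod_eq_zero_iff_dvd c N).mpr hc)
  · ext i
    fin_cases i <;> simp [mulVec, dotProduct, h₀, h₁]

theorem cuspRel.exists_entries {N : ℕ} {v w : PrimVec} (h : cuspRel N v w) :
    ∃ a b c d ε : ℤ, a * d - b * c = 1 ∧ (N : ℤ) ∣ c ∧ ε * ε = 1 ∧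
      a * v.1 0 + b * v.1 1 = ε * w.1 0 ∧ c * v.1 0 + d * v.1 1 = ε * w.1 1 := by
  obtain ⟨γ, hγ, ε, hγv⟩ := h
  refine ⟨γ 0 0, γ 0 1, γ 1 0, γ 1 1, ε, by rw [← det_fin_two]; exact γ.det_coe,
    (ZMod.intCast_zmod_eq_zero_iff_dvd _ N).mp (CongruenceSubgroup.Gamma0_mem.mp hγ),
    by rw [← Units.val_mul, Int.units_mul_self, Units.val_one], ?_, ?_⟩
  · simpa [mulVec, dotProduct] using congrFun hγv 0
  · simpa [mulVec, dotProduct] using congrFun hγv 1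

namespace PrimVec

variable (N : ℕ)

def cuspDenom (v : PrimVec) : ℕ := Int.gcd (v.1 1) N

def cuspNumer (v : PrimVec) : ℤ := v.1 0 * (v.1 1 / v.cuspDenom N)

variable {N}

theorem cuspDenom_dvd (v : PrimVec) : v.cuspDenom N ∣ N := by
  exact_mod_cast Int.gcd_dvd_right (v.1 1) N

theorem cuspDenom_dvd_snd (v : PrimVec) : (v.cuspDenom N : ℤ) ∣ v.1 1 := Int.gcd_dvd_left _ _

theorem cuspDenom_pos (hN : N ≠ 0) (v : PrimVec) : 0 < v.cuspDenom N :=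
  Int.gcd_pos_of_ne_zero_right _ (by exact_mod_cast hN)

theorem isCoprime_snd_div_cuspDenom (hN : N ≠ 0) (v : PrimVec) :
    IsCoprime (v.1 1 / v.cuspDenom N) (N / v.cuspDenom N : ℕ) := by
  rw [Int.isCoprime_iff_gcd_eq_one, Int.natCast_div]
  exact Int.gcd_div_gcd_div_gcd (cuspDenom_pos hN v)

theorem isCoprime_cuspNumer (hN : N ≠ 0) (v : PrimVec) :
    IsCoprime (v.cuspNumer N) (Nat.gcd (v.cuspDenom N) (N / v.cuspDenom N)) :=
  .mul_left (v.2.of_isCoprime_of_dvd_right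
      ((Int.natCast_dvd_natCast.mpr (Nat.gcd_dvd_left _ _)).trans v.cuspDenom_dvd_snd))
    ((isCoprime_snd_div_cuspDenom hN v).of_isCoprime_of_dvd_right
      (Int.natCast_dvd_natCast.mpr (Nat.gcd_dvd_right _ _)))

theorem cuspDenom_eq_of_cuspRel {v w : PrimVec} (h : cuspRel N v w) :
    w.cuspDenom N = v.cuspDenom N := by
  obtain ⟨a, b, c, d, ε, hdet, hc, hε, h₀, h₁⟩ := h.exists_entries
  have hcN (x : ℤ) : (Int.gcd x N : ℤ) ∣ c := (Int.gcd_dvd_right _ _).trans hc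
  have hw : w.1 1 = ε * (c * v.1 0 + d * v.1 1) := by
    linear_combination (-ε) * h₁ - w.1 1 * hε
  have hv : v.1 1 = ε * (a * w.1 1 - c * w.1 0) := by
    linear_combination a * h₁ - c * h₀ - v.1 1 * hdet
  refine Nat.dvd_antisymm (Int.dvd_gcd ?_ (Int.gcd_dvd_right _ _))
    (Int.dvd_gcd ?_ (Int.gcd_dvd_right _ _))
  · rw [hv]
    exact (dvd_sub (w.cuspDenom_dvd_snd.mul_left a) ((hcN _).mul_right _)).mul_left ε
  · rw [hw]
    exact (dvd_add ((hcN _).mul_right _) (v.cuspDenom_dvd_snd.mul_left d)).mul_left ε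

theorem cuspNumer_modEq_of_cuspRel (hN : N ≠ 0) {v w : PrimVec} (h : cuspRel N v w) :
    w.cuspNumer N ≡ v.cuspNumer N [ZMOD Nat.gcd (v.cuspDenom N) (N / v.cuspDenom N)] := by
  have he := cuspDenom_eq_of_cuspRel h
  obtain ⟨a, b, c, d, ε, hdet, ⟨k, hk⟩, hε, h₀, h₁⟩ := h.exists_entries
  set e := v.cuspDenom N
  set m := N / e
  have hN' : (N : ℤ) = e * m := by exact_mod_cast (Nat.mul_div_cancel' v.cuspDenom_dvd).symm
  have he0 : (e : ℤ) ≠ 0 := by exact_mod_cast (cuspDenom_pos hN v).ne'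
  obtain ⟨q, hq⟩ : (e : ℤ) ∣ v.1 1 := v.cuspDenom_dvd_snd
  obtain ⟨q', hq'⟩ : (e : ℤ) ∣ w.1 1 := he ▸ w.cuspDenom_dvd_snd
  unfold cuspNumer
  rw [he, hq, hq', Int.mul_ediv_cancel_left _ he0, Int.mul_ediv_cancel_left _ he0]
  have hεq' : ε * q' = m * k * v.1 0 + d * q := mul_left_cancel₀ he0 <| by
    linear_combination -h₁ + v.1 0 * hk + k * v.1 0 * hN' + d * hq - ε * hq'
  -- Modulo `gcd e m`: `ε w₀ ≡ a v₀`, `ε q' ≡ d q` and `a d ≡ 1`; `key` makes this exact.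
  have key : w.1 0 * q' - v.1 0 * q =
      m * (a * k * v.1 0 ^ 2 + 2 * b * e * k * q * v.1 0) + e * (b * d * q ^ 2) := by
    linear_combination (-(ε * q')) * h₀ - w.1 0 * q' * hε + (a * v.1 0 + b * v.1 1) * hεq'
      + b * (m * k * v.1 0 + d * q) * hq + v.1 0 * q * hdet + b * v.1 0 * q * hk
      + b * k * v.1 0 * q * hN'
  refine Int.modEq_iff_dvd.mpr (dvd_sub_comm.mp ?_)
  rw [key]
  exact dvd_add (dvd_mul_of_dvd_left (Int.natCast_dvd_natCast.mpr (Nat.gcd_dvd_right _ _)) _)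
    (dvd_mul_of_dvd_left (Int.natCast_dvd_natCast.mpr (Nat.gcd_dvd_left _ _)) _)

end PrimVec

def CuspData (N : ℕ) : Type := Σ e : N.divisors, (ZMod (Nat.gcd e (N / e)))ˣ

namespace CuspData

variable {N : ℕ}

def mk (e : ℕ) (he : e ∈ N.divisors) (x : ℤ) (hx : IsCoprime x (Nat.gcd e (N / e))) :
    CuspData N :=
  ⟨⟨e, he⟩, ZMod.unitOfIsCoprime x hx⟩

theorem mk_eq_mk_iff {e e' : ℕ} {he : e ∈ N.divisors} {he' : e' ∈ N.divisors} {x x' : ℤ}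
    {hx : IsCoprime x (Nat.gcd e (N / e))} {hx' : IsCoprime x' (Nat.gcd e' (N / e'))} :
    mk e he x hx = mk e' he' x' hx' ↔ e = e' ∧ x ≡ x' [ZMOD Nat.gcd e (N / e)] := by
  rw [← ZMod.intCast_eq_intCast_iff]
  constructor
  · intro h
    obtain rfl : e = e' := congrArg (fun t : CuspData N => (t.1 : ℕ)) h
    simpa [mk, Units.ext_iff] using eq_of_heq (Sigma.mk.inj_iff.mp h).2
  · rintro ⟨rfl, h⟩
    exact Sigma.ext rfl (heq_of_eq (Units.ext h))

theorem exists_eq_mk (t : CuspData N) : ∃ e he x hx, t = mk e he x hx := by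
  obtain ⟨⟨e, he⟩, u⟩ := t
  have hu : IsCoprime (ZMod.cast (u : ZMod (Nat.gcd e (N / e))) : ℤ) (Nat.gcd e (N / e)) := by
    rw [isCoprime_comm, ← ZMod.coe_int_isUnit_iff_isCoprime, ZMod.intCast_zmod_cast]
    exact u.isUnit
  exact ⟨e, he, _, hu, Sigma.ext rfl (heq_of_eq (Units.ext (ZMod.intCast_zmod_cast _).symm))⟩

end CuspData

instance CuspData.neZero_gcd {N : ℕ} (e : N.divisors) : NeZero (Nat.gcd e (N / e)) :=
  ⟨(Nat.gcd_pos_of_pos_left _ (Nat.pos_of_mem_divisors e.2)).ne'⟩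

theorem CuspData.card (N : ℕ) :
    Nat.card (CuspData N) = ∑ e ∈ N.divisors, (Nat.gcd e (N / e)).totient := by
  rw [CuspData, Nat.card_sigma, ← Finset.sum_coe_sort N.divisors]
  refine Finset.sum_congr rfl fun e _ => ?_
  rw [Nat.card_eq_fintype_card, ZMod.card_units_eq_totient]

namespace PrimVec

variable {N : ℕ}

def cuspInvariant (hN : N ≠ 0) (v : PrimVec) : CuspData N :=
  .mk (v.cuspDenom N) (Nat.mem_divisors.mpr ⟨v.cuspDenom_dvd, hN⟩) (v.cuspNumer N)
    (isCoprime_cuspNumer hN v)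

theorem cuspInvariant_eq_of_cuspRel (hN : N ≠ 0) {v w : PrimVec} (h : cuspRel N v w) :
    v.cuspInvariant hN = w.cuspInvariant hN :=
  CuspData.mk_eq_mk_iff.mpr
    ⟨(cuspDenom_eq_of_cuspRel h).symm, (cuspNumer_modEq_of_cuspRel hN h).symm⟩

def ofCoprime (a : ℤ) (c : ℕ) (h : IsCoprime a c) : PrimVec := ⟨![a, c], by simpa using h⟩

@[simp]
theorem ofCoprime_fst {a : ℤ} {c : ℕ} (h : IsCoprime a c) : (ofCoprime a c h).1 0 = a := rfl

@[simp]
theorem ofCoprime_snd {a : ℤ} {c : ℕ} (h : IsCoprime a c) : (ofCoprime a c h).1 1 = c := rfl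

theorem cuspDenom_ofCoprime {a : ℤ} {c : ℕ} (hc : c ∣ N) (h : IsCoprime a c) :
    (ofCoprime a c h).cuspDenom N = c := by
  simp [cuspDenom, Int.gcd_natCast_natCast, Nat.gcd_eq_left hc]

theorem cuspNumer_ofCoprime {a : ℤ} {c : ℕ} (hc : c ∣ N) (hc0 : c ≠ 0) (h : IsCoprime a c) :
    (ofCoprime a c h).cuspNumer N = a := by
  simp [cuspNumer, cuspDenom_ofCoprime hc, hc0]

theorem exists_cuspRel_ofCoprime (hN : N ≠ 0) (v : PrimVec) {c : ℕ} (hc : v.cuspDenom N = c) :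
    ∃ a h, cuspRel N v (ofCoprime a c h) := by
  have hN' : (N : ℤ) = c * (N / c : ℕ) := by
    exact_mod_cast (Nat.mul_div_cancel' (hc ▸ v.cuspDenom_dvd)).symm
  have hc0 : (c : ℤ) ≠ 0 := by exact_mod_cast hc ▸ (cuspDenom_pos hN v).ne'
  obtain ⟨u, u', hu⟩ := hc ▸ isCoprime_snd_div_cuspDenom hN v
  have hq : v.1 1 = c * (v.1 1 / c) := (Int.mul_ediv_cancel' (hc ▸ v.cuspDenom_dvd_snd)).symm
  set q := v.1 1 / c
  set m : ℕ := N / c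
  obtain ⟨r, s, hrs⟩ := v.2
  have hr : IsCoprime r (Int.gcd m c) :=
    IsCoprime.of_isCoprime_of_dvd_right ⟨v.1 0, s, by linear_combination hrs⟩
      ((Int.gcd_dvd_right _ _).trans (hq ▸ dvd_mul_right _ _))
  have hu' : IsCoprime u (Int.gcd m c) :=
    IsCoprime.of_isCoprime_of_dvd_right ⟨q, u', by linear_combination hu⟩ (Int.gcd_dvd_left _ _)
  obtain ⟨y, hy, a, b, hab⟩ := Int.exists_modEq_isCoprime hc0 (hr.mul_left hu')
  obtain ⟨t, ht⟩ := hy.dvd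
  -- `[[a r + b q, a s - b p], [c r - y q, c s + y p]]` maps `(p, q)` to `(a, c)` and has
  -- determinant `(a y + b c) (r p + s q) = 1`; its lower-left entry `c (r - y q/c)` is divisible
  -- by `N = c m` because `y ≡ r u` and `u q/c ≡ 1` modulo `m`.
  refine ⟨a, ⟨y, b, by linear_combination hab⟩,
    cuspRel_of_entries (a * r + b * v.1 1) (a * s - b * v.1 0) (c * r - y * v.1 1)
      (c * s + y * v.1 0) (by linear_combination (a * y + b * c) * hrs + hab)
      ⟨q * t + r * u', ?_⟩ (by show _ = a; linear_combination a * hrs)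
      (by show _ = (c : ℤ); linear_combination c * hrs)⟩
  linear_combination (-y) * hq - (q * t + r * u') * hN' - c * r * hu + c * q * ht

theorem cuspRel_ofCoprime_of_modEq {c : ℕ} (hc : c ∣ N) {a a' : ℤ} (h : IsCoprime a c)
    (h' : IsCoprime a' c) (haa' : a ≡ a' [ZMOD Nat.gcd c (N / c)]) :
    cuspRel N (ofCoprime a c h) (ofCoprime a' c h') := by
  set m := N / c
  have hN' : (N : ℤ) = c * m := by exact_mod_cast (Nat.mul_div_cancel' hc).symm
  obtain ⟨g, hg⟩ := Int.exists_mul_mul_modEq_of_gcd_dvd (z := a' - a) (h.mul_left h')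
    (by rw [Int.gcd_natCast_natCast]; exact haa'.dvd)
  obtain ⟨β, hβ⟩ := hg.dvd
  -- `[[1 + m g a', β], [N g, 1 - m g a]]` has determinant `1 + m g (a' - a - m g a a' - c β)`.
  exact cuspRel_of_entries (1 + m * g * a') β (N * g) (1 - m * g * a)
    (by linear_combination m * g * hβ - β * g * hN') (dvd_mul_right _ _)
    (by simp only [ofCoprime_fst, ofCoprime_snd]; linear_combination -hβ)
    (by simp only [ofCoprime_fst, ofCoprime_snd]; linear_combination g * a * hN')

theorem quot_mk_eq_of_cuspInvariant_eq (hN : N ≠ 0) {v w : PrimVec}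
    (h : v.cuspInvariant hN = w.cuspInvariant hN) :
    Quot.mk (cuspRel N) v = Quot.mk (cuspRel N) w := by
  obtain ⟨hvw, hx⟩ := CuspData.mk_eq_mk_iff.mp h
  have hc := v.cuspDenom_dvd (N := N)
  have hc0 := (cuspDenom_pos hN v).ne'
  obtain ⟨a, ha, hva⟩ := exists_cuspRel_ofCoprime hN v rfl
  obtain ⟨a', ha', hwa'⟩ := exists_cuspRel_ofCoprime hN w hvw.symm
  have hxa := cuspNumer_modEq_of_cuspRel hN hva
  have hxa' := cuspNumer_modEq_of_cuspRel hN hwa'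
  rw [cuspNumer_ofCoprime hc hc0] at hxa hxa'
  rw [← hvw] at hxa'
  have haa' := hxa.trans (hx.trans hxa'.symm)
  exact (Quot.sound hva).trans
    ((Quot.sound (cuspRel_ofCoprime_of_modEq hc ha ha' haa')).trans (Quot.sound hwa').symm)

theorem cuspInvariant_surjective (hN : N ≠ 0) : Function.Surjective (cuspInvariant hN) := by
  intro t
  obtain ⟨e, he, x, hx, rfl⟩ := CuspData.exists_eq_mk t
  have hdvd := Nat.dvd_of_mem_divisors he
  have he0 := (Nat.pos_of_mem_divisors he).ne'
  obtain ⟨a, hax, ha⟩ := Int.exists_modEq_isCoprime (m := Nat.gcd e (N / e)) (c := e)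
    (by exact_mod_cast he0)
    (by rwa [Int.gcd_natCast_natCast, Nat.gcd_eq_left (Nat.gcd_dvd_left _ _)])
  refine ⟨ofCoprime a e ha, CuspData.mk_eq_mk_iff.mpr ⟨cuspDenom_ofCoprime hdvd ha, ?_⟩⟩
  rw [cuspDenom_ofCoprime hdvd ha, cuspNumer_ofCoprime hdvd he0]
  exact hax

end PrimVec

/-- The number of `Γ₀(N)`-inequivalent cusps equals
`∑_{e ∣ N} φ(gcd(e, N/e))`. -/
theorem card_cusps_Gamma0 (N : ℕ) (hN : 0 < N) :
    Nat.card (Quot (cuspRel N)) =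
      ∑ e ∈ N.divisors, (Nat.gcd e (N / e)).totient := by
  rw [← CuspData.card]
  refine Nat.card_eq_of_bijective (Quot.lift (PrimVec.cuspInvariant hN.ne')
    fun _ _ => PrimVec.cuspInvariant_eq_of_cuspRel hN.ne') ⟨?_, ?_⟩
  · rintro ⟨v⟩ ⟨w⟩ h
    exact PrimVec.quot_mk_eq_of_cuspInvariant_eq hN.ne' h
  · exact (Quot.surjective_lift _).mpr (PrimVec.cuspInvariant_surjective hN.ne')
end

section
/- Euler–Jacobi identity: η(τ)³ = ∑_{n > 0} (−4/n) · n · q^{n²/8}, where (−4/n) is the Kronecker symbol and q = e^{2πiτ}. -/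
/-!
With `q = e^{2πiτ}` we have `η(τ)³ = e^{πiτ/4} ∏ (1 - qⁿ)³`, so the claim is Jacobi's identity
`∏_{n ≥ 1} (1 - qⁿ)³ = ∑_{n ≥ 0} (-1)ⁿ (2n + 1) q^{n(n+1)/2}`. It is the limit `N → ∞` of the
polynomial identities (for `N ≥ 1`)
`∑_j (-1)ʲ [2N, N+j]_q q^{j(j+1)/2} = 0`, `∑_j j (-1)ʲ [2N, N+j]_q q^{j(j+1)/2} = (q;q)_N (q;q)_{N-1}`,
which follow together by induction on `N` from the three-term recurrence of `[2N, k]_q` in `N`.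
For `|q| < 1` the coefficients `[2N, N+j]_q = (q;q)_{2N} / ((q;q)_{N+j} (q;q)_{N-j})` are bounded
uniformly and tend to `1 / (q;q)_∞`, so dominated convergence gives
`∑_{j ∈ ℤ} j (-1)ʲ q^{j(j+1)/2} = (q;q)_∞³`; pairing `j` with `-1-j` yields the one-sided sum.
-/

open Complex

/-- The Dedekind eta function `η(τ) = q^{1/24} ∏_{n ≥ 1} (1 − qⁿ)`, `q = e^{2πiτ}`. -/
noncomputable def dedekindEta (τ : ℂ) : ℂ :=
  Complex.exp (Real.pi * Complex.I * τ / 12) *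
    ∏' n : ℕ, (1 - Complex.exp (2 * Real.pi * Complex.I * τ) ^ (n + 1))

/-- The Kronecker symbol `(−4/n)`: `1` if `n ≡ 1 mod 4`, `−1` if `n ≡ 3 mod 4`,
`0` if `n` is even. -/
def kronNeg4 (n : ℤ) : ℤ :=
  if n % 4 = 1 then 1 else if n % 4 = 3 then -1 else 0

open Finset Filter Topology Function

section GaussianBinomial

variable {K : Type*} [Field K] (q : K)

-- `[N, k]_q`, indexed by `k : ℤ` and zero outside `0 ≤ k ≤ N`, so that shifting `k` needs no
-- case distinctions.
def gaussBinom : ℕ → ℤ → K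
  | 0, k => if k = 0 then 1 else 0
  | N + 1, k => gaussBinom N k + q ^ ((N : ℤ) + 1 - k) * gaussBinom N (k - 1)

theorem gaussBinom_succ (N : ℕ) (k : ℤ) :
    gaussBinom q (N + 1) k = gaussBinom q N k + q ^ ((N : ℤ) + 1 - k) * gaussBinom q N (k - 1) :=
  rfl

theorem gaussBinom_eq_zero_of_notMem_Icc (N : ℕ) {k : ℤ} (hk : k ∉ Set.Icc 0 (N : ℤ)) :
    gaussBinom q N k = 0 := by
  induction N generalizing k with
  | zero => simp_all [gaussBinom]
  | succ N ih =>
    rw [gaussBinom_succ, ih (by grind), ih (by grind), mul_zero, add_zero]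

theorem gaussBinom_zero_right (N : ℕ) : gaussBinom q N 0 = 1 := by
  induction N with
  | zero => simp [gaussBinom]
  | succ N ih => simp [gaussBinom_succ, ih, gaussBinom_eq_zero_of_notMem_Icc]

theorem gaussBinom_self (N : ℕ) : gaussBinom q N N = 1 := by
  induction N with
  | zero => simp [gaussBinom]
  | succ N ih =>
    rw [gaussBinom_succ, gaussBinom_eq_zero_of_notMem_Icc q N (by simp)]
    simpa using ih

variable {q}

theorem gaussBinom_succ' (hq : q ≠ 0) (N : ℕ) (k : ℤ) :
    gaussBinom q (N + 1) k = q ^ k * gaussBinom q N k + gaussBinom q N (k - 1) := by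
  induction N generalizing k with
  | zero =>
    simp only [gaussBinom]
    rcases eq_or_ne k 0 with rfl | h0
    · simp
    rcases eq_or_ne k 1 with rfl | h1
    · simp
    · simp [h0, h1, sub_eq_zero]
  | succ N ih =>
    rw [gaussBinom_succ q (N + 1) k]
    conv_rhs => rw [gaussBinom_succ q N k, gaussBinom_succ q N (k - 1)]
    rw [ih k, ih (k - 1), show ((N + 1 : ℕ) : ℤ) + 1 - k = N + 1 - (k - 1) by push_cast; ring]
    have h : q ^ ((N : ℤ) + 1 - (k - 1)) * q ^ (k - 1) = q ^ k * q ^ ((N : ℤ) + 1 - k) := by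
      rw [← zpow_add₀ hq, ← zpow_add₀ hq]; ring_nf
    linear_combination gaussBinom q N (k - 1) * h

theorem gaussBinom_add_two (hq : q ≠ 0) (N : ℕ) (k : ℤ) :
    gaussBinom q (N + 2) k = q ^ k * gaussBinom q N k + (1 + q ^ (N + 1)) * gaussBinom q N (k - 1)
      + q ^ ((N : ℤ) + 2 - k) * gaussBinom q N (k - 2) := by
  rw [gaussBinom_succ, gaussBinom_succ' hq, gaussBinom_succ' hq,
    show ((N + 1 : ℕ) : ℤ) + 1 - k = N + 2 - k by push_cast; ring, show k - 1 - 1 = k - 2 by ring]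
  have h : q ^ ((N : ℤ) + 2 - k) * q ^ (k - 1) = q ^ (N + 1) := by
    rw [← zpow_add₀ hq, ← zpow_natCast]; push_cast; ring_nf
  linear_combination gaussBinom q N (k - 1) * h

variable (q) in
def qPochhammer (m : ℕ) : K := ∏ i ∈ range m, (1 - q ^ (i + 1))

theorem gaussBinom_mul_qPochhammer_mul_qPochhammer (a b : ℕ) :
    gaussBinom q (a + b) a * (qPochhammer q a * qPochhammer q b) = qPochhammer q (a + b) := by
  induction a generalizing b with
  | zero => simp [gaussBinom_zero_right, qPochhammer]
  | succ a iha =>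
    induction b with
    | zero => rw [add_zero, gaussBinom_self]; simp [qPochhammer]
    | succ b ihb =>
      have ha := iha (b + 1)
      rw [show a + (b + 1) = a + 1 + b by ring] at ha
      rw [show a + 1 + (b + 1) = a + 1 + b + 1 by ring, gaussBinom_succ,
        show ((a + 1 + b : ℕ) : ℤ) + 1 - (a + 1 : ℕ) = (b + 1 : ℕ) by push_cast; ring,
        zpow_natCast, show ((a + 1 : ℕ) : ℤ) - 1 = a by push_cast; ring]
      simp only [qPochhammer, prod_range_succ] at *
      -- `1 - q ^ (a + b + 2) = (1 - q ^ (b + 1)) + q ^ (b + 1) * (1 - q ^ (a + 1))`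
      linear_combination (1 - q ^ (b + 1)) * ihb + q ^ (b + 1) * (1 - q ^ (a + 1)) * ha

end GaussianBinomial

def triangular (j : ℤ) : ℕ := (j * (j + 1) / 2).toNat

theorem two_mul_natCast_triangular (j : ℤ) : 2 * (triangular j : ℤ) = j * (j + 1) := by
  have h : 0 ≤ j * (j + 1) := by rcases le_or_gt 0 j with h | h <;> nlinarith
  rw [triangular, Int.toNat_of_nonneg (by omega)]
  exact Int.two_mul_ediv_two_of_even (Int.even_mul_succ_self j)

theorem natCast_triangular_add_one (j : ℤ) :
    (triangular (j + 1) : ℤ) = triangular j + (j + 1) := by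
  grind [two_mul_natCast_triangular]

theorem natCast_triangular_sub_one (j : ℤ) :
    (triangular (j - 1) : ℤ) = triangular j - j := by
  grind [two_mul_natCast_triangular]

theorem triangular_neg_add_one (j : ℤ) : triangular (-(j + 1)) = triangular j := by
  grind [two_mul_natCast_triangular]

theorem le_triangular (n : ℕ) : n ≤ triangular n := by
  have := two_mul_natCast_triangular n
  nlinarith

section FiniteJacobi

variable {K : Type*} [Field K] {q : K}

variable (q) in
def jacobiTerm (n : ℕ) (j : ℤ) : K :=
  (-1) ^ j * gaussBinom q (2 * n) (n + j) * q ^ triangular j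

theorem hasFiniteSupport_jacobiTerm (n : ℕ) : (jacobiTerm q n).HasFiniteSupport := by
  refine (Set.finite_Icc (-(n : ℤ)) n).subset fun j => ?_
  contrapose
  intro hj
  rw [notMem_support, jacobiTerm, gaussBinom_eq_zero_of_notMem_Icc q _ (by push_cast; grind),
    mul_zero, zero_mul]

theorem jacobiTerm_succ (hq : q ≠ 0) (n : ℕ) (j : ℤ) :
    jacobiTerm q (n + 1) j = -q ^ n * jacobiTerm q n (j + 1)
      + (1 + q ^ (2 * n + 1)) * jacobiTerm q n j - q ^ (n + 1) * jacobiTerm q n (j - 1) := by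
  have hq₁ : q ^ ((n : ℤ) + (j + 1)) * q ^ triangular j = q ^ n * q ^ triangular (j + 1) := by
    simp only [← zpow_natCast, ← zpow_add₀ hq, natCast_triangular_add_one]; ring_nf
  have hq₂ : q ^ (((2 * n : ℕ) : ℤ) + 2 - (n + (j + 1))) * q ^ triangular j
      = q ^ (n + 1) * q ^ triangular (j - 1) := by
    simp only [← zpow_natCast, ← zpow_add₀ hq, natCast_triangular_sub_one]; push_cast; ring_nf
  have hs₁ : (-1 : K) ^ (j + 1) = -(-1) ^ j := by rw [zpow_add_one₀ (by norm_num)]; ring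
  have hs₂ : (-1 : K) ^ (j - 1) = -(-1) ^ j := by rw [zpow_sub_one₀ (by norm_num)]; simp
  rw [jacobiTerm, show 2 * (n + 1) = 2 * n + 2 by ring, gaussBinom_add_two hq,
    show ((n + 1 : ℕ) : ℤ) + j = n + (j + 1) by push_cast; ring,
    show (n : ℤ) + (j + 1) - 1 = n + j by ring, show (n : ℤ) + (j + 1) - 2 = n + (j - 1) by ring,
    jacobiTerm, jacobiTerm, jacobiTerm, hs₁, hs₂]
  linear_combination (-1) ^ j * (gaussBinom q (2 * n) (n + (j + 1)) * hq₁
    + gaussBinom q (2 * n) (n + (j - 1)) * hq₂)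

theorem finsum_mul_jacobiTerm_succ (hq : q ≠ 0) (w : ℤ → K) (n : ℕ) :
    ∑ᶠ j, w j * jacobiTerm q (n + 1) j
      = ∑ᶠ j, (-q ^ n * w (j - 1) + (1 + q ^ (2 * n + 1)) * w j - q ^ (n + 1) * w (j + 1))
          * jacobiTerm q n j := by
  have hA := hasFiniteSupport_jacobiTerm (q := q) n
  have hshift : ∀ (s : ℤ) (v : ℤ → K),
      ∑ᶠ j, v j * jacobiTerm q n (j + s) = ∑ᶠ j, v (j - s) * jacobiTerm q n j := fun s v => by
    conv_rhs => rw [← finsum_comp_equiv (Equiv.addRight s)]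
    simp
  have hfin : ∀ (s : ℤ) (v : ℤ → K), HasFiniteSupport fun j => v j * jacobiTerm q n (j + s) :=
    fun s v => (hA.comp_of_injective (add_left_injective s)).fun_mul_right v
  have hfin₀ : ∀ v : ℤ → K, HasFiniteSupport fun j => v j * jacobiTerm q n j :=
    fun v => hA.fun_mul_right v
  calc ∑ᶠ j, w j * jacobiTerm q (n + 1) j
      = ∑ᶠ j, ((-q ^ n * w j) * jacobiTerm q n (j + 1)
          + (1 + q ^ (2 * n + 1)) * w j * jacobiTerm q n j
          + (-q ^ (n + 1) * w j) * jacobiTerm q n (j + -1)) :=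
        finsum_congr fun j => by rw [jacobiTerm_succ hq, ← sub_eq_add_neg]; ring
    _ = ∑ᶠ j, (-q ^ n * w (j - 1)) * jacobiTerm q n j
          + ∑ᶠ j, (1 + q ^ (2 * n + 1)) * w j * jacobiTerm q n j
          + ∑ᶠ j, (-q ^ (n + 1) * w (j + 1)) * jacobiTerm q n j := by
        rw [finsum_add_distrib ((hfin _ _).fun_add (hfin₀ _)) (hfin _ _),
          finsum_add_distrib (hfin _ _) (hfin₀ _), hshift, hshift]
        simp
    _ = _ := by
        rw [← finsum_add_distrib (hfin₀ _) (hfin₀ _),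
          ← finsum_add_distrib ((hfin₀ _).fun_add (hfin₀ _)) (hfin₀ _)]
        exact finsum_congr fun j => by ring

theorem finsum_mul_jacobiTerm_zero (w : ℤ → K) : ∑ᶠ j, w j * jacobiTerm q 0 j = w 0 := by
  rw [finsum_eq_single _ 0 fun j hj => by simp [jacobiTerm, gaussBinom, hj]]
  simp [jacobiTerm, gaussBinom, triangular]

theorem finsum_jacobiTerm_succ (hq : q ≠ 0) (n : ℕ) :
    ∑ᶠ j, jacobiTerm q (n + 1) j = (1 - q ^ n) * (1 - q ^ (n + 1)) * ∑ᶠ j, jacobiTerm q n j := by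
  have h := finsum_mul_jacobiTerm_succ hq (fun _ => 1) n
  simp only [one_mul, mul_one] at h
  rw [h, mul_finsum]
  exact finsum_congr fun j => by ring

theorem finsum_jacobiTerm_succ_eq_zero (hq : q ≠ 0) (n : ℕ) :
    ∑ᶠ j, jacobiTerm q (n + 1) j = 0 := by
  induction n with
  | zero => rw [finsum_jacobiTerm_succ hq, pow_zero, sub_self, zero_mul, zero_mul]
  | succ n ih => rw [finsum_jacobiTerm_succ hq, ih, mul_zero]

theorem finsum_intCast_mul_jacobiTerm_succ (hq : q ≠ 0) (n : ℕ) :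
    ∑ᶠ j : ℤ, (j : K) * jacobiTerm q (n + 1) j = qPochhammer q (n + 1) * qPochhammer q n := by
  induction n with
  | zero =>
    rw [finsum_mul_jacobiTerm_succ hq, finsum_mul_jacobiTerm_zero]
    simp [qPochhammer]
  | succ n ih =>
    have hA := hasFiniteSupport_jacobiTerm (q := q) (n + 1)
    set c := (1 - q ^ (n + 1)) * (1 - q ^ (n + 2))
    calc ∑ᶠ j : ℤ, (j : K) * jacobiTerm q (n + 2) j
        = ∑ᶠ j : ℤ, (c * (j * jacobiTerm q (n + 1) j)
            + (q ^ (n + 1) - q ^ (n + 2)) * jacobiTerm q (n + 1) j) := by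
          rw [finsum_mul_jacobiTerm_succ hq]
          exact finsum_congr fun j => by push_cast; ring
      _ = c * (qPochhammer q (n + 1) * qPochhammer q n) := by
          rw [finsum_add_distrib ((hA.fun_mul_right _).fun_mul_right _) (hA.fun_mul_right _),
            ← mul_finsum, ← mul_finsum, ih, finsum_jacobiTerm_succ_eq_zero hq, mul_zero, add_zero]
      _ = qPochhammer q (n + 2) * qPochhammer q (n + 1) := by
          simp only [c, qPochhammer, prod_range_succ]; ring

end FiniteJacobi

section Analytic

variable {q : ℂ}

theorem one_sub_pow_succ_ne_zero (hq : ‖q‖ < 1) (i : ℕ) : 1 - q ^ (i + 1) ≠ 0 := by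
  have h : ‖q ^ (i + 1)‖ < 1 := by
    rw [norm_pow]; exact pow_lt_one₀ (norm_nonneg _) hq (Nat.succ_ne_zero i)
  exact sub_ne_zero.mpr fun h₁ => by rw [← h₁, norm_one] at h; exact lt_irrefl _ h

theorem tprod_one_sub_pow_succ_ne_zero (hq : ‖q‖ < 1) : ∏' i : ℕ, (1 - q ^ (i + 1)) ≠ 0 := by
  simp_rw [sub_eq_add_neg]
  refine tprod_one_add_ne_zero_of_summable (fun i => ?_) ?_
  · rw [← sub_eq_add_neg]; exact one_sub_pow_succ_ne_zero hq i
  · simpa [norm_pow, pow_succ] using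
      (summable_geometric_of_lt_one (norm_nonneg _) hq).mul_right ‖q‖

theorem tendsto_qPochhammer (hq : ‖q‖ < 1) :
    Tendsto (qPochhammer q) atTop (𝓝 (∏' i : ℕ, (1 - q ^ (i + 1)))) :=
  (ModularForm.multipliable_one_sub_pow hq).hasProd.tendsto_prod_nat

theorem qPochhammer_ne_zero (hq : ‖q‖ < 1) (m : ℕ) : qPochhammer q m ≠ 0 :=
  prod_ne_zero_iff.mpr fun i _ => one_sub_pow_succ_ne_zero hq i

theorem gaussBinom_add_eq_div (hq : ‖q‖ < 1) (a b : ℕ) :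
    gaussBinom q (a + b) a = qPochhammer q (a + b) / (qPochhammer q a * qPochhammer q b) :=
  eq_div_of_mul_eq (mul_ne_zero (qPochhammer_ne_zero hq a) (qPochhammer_ne_zero hq b))
    (gaussBinom_mul_qPochhammer_mul_qPochhammer a b)

theorem exists_norm_gaussBinom_le (hq : ‖q‖ < 1) : ∃ C, ∀ N k, ‖gaussBinom q N k‖ ≤ C := by
  have hP := tendsto_qPochhammer hq
  obtain ⟨C, hC⟩ := isBounded_iff_forall_norm_le.mp (Metric.isBounded_range_of_tendsto _ hP)
  obtain ⟨D, hD⟩ := isBounded_iff_forall_norm_le.mp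
    (Metric.isBounded_range_of_tendsto _ (hP.inv₀ (tprod_one_sub_pow_succ_ne_zero hq)))
  have hC' : ∀ m, ‖qPochhammer q m‖ ≤ C := fun m => hC _ (Set.mem_range_self m)
  have hD' : ∀ m, ‖(qPochhammer q m)⁻¹‖ ≤ D := fun m => hD _ (Set.mem_range_self m)
  have hC₀ : 0 ≤ C := (norm_nonneg _).trans (hC' 0)
  have hD₀ : 0 ≤ D := (norm_nonneg _).trans (hD' 0)
  refine ⟨C * D * D, fun N k => ?_⟩
  by_cases hk : k ∈ Set.Icc 0 (N : ℤ)
  · obtain ⟨a, rfl⟩ : ∃ a : ℕ, (a : ℤ) = k := ⟨k.toNat, by grind⟩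
    obtain ⟨b, rfl⟩ : ∃ b, N = a + b := ⟨N - a, by grind⟩
    rw [gaussBinom_add_eq_div hq, div_eq_mul_inv, mul_inv, norm_mul, norm_mul, ← mul_assoc]
    exact mul_le_mul (mul_le_mul (hC' _) (hD' _) (norm_nonneg _) hC₀) (hD' _) (norm_nonneg _)
      (mul_nonneg hC₀ hD₀)
  · rw [gaussBinom_eq_zero_of_notMem_Icc q N hk, norm_zero]
    exact mul_nonneg (mul_nonneg hC₀ hD₀) hD₀

theorem tendsto_gaussBinom_two_mul (hq : ‖q‖ < 1) (j : ℤ) :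
    Tendsto (fun n : ℕ => gaussBinom q (2 * n) (n + j)) atTop
      (𝓝 (∏' i : ℕ, (1 - q ^ (i + 1)))⁻¹) := by
  set P := ∏' i : ℕ, (1 - q ^ (i + 1))
  have hP := tprod_one_sub_pow_succ_ne_zero hq
  have hlim : ∀ g : ℕ → ℕ, (∀ b, ∃ N, ∀ n ≥ N, b ≤ g n) →
      Tendsto (fun n => qPochhammer q (g n)) atTop (𝓝 P) :=
    fun g hg => (tendsto_qPochhammer hq).comp (tendsto_atTop_atTop.mpr hg)
  have h := (hlim (2 * ·) fun b => ⟨b, by omega⟩).div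
    ((hlim (fun n => (n + j).toNat) fun b => ⟨b + j.natAbs, by omega⟩).mul
      (hlim (fun n => (n - j).toNat) fun b => ⟨b + j.natAbs, by omega⟩)) (mul_ne_zero hP hP)
  rw [show P / (P * P) = P⁻¹ by field_simp] at h
  refine h.congr' ((eventually_ge_atTop j.natAbs).mono fun n hn => ?_)
  obtain ⟨a, ha⟩ : ∃ a : ℕ, (a : ℤ) = n + j := ⟨_, Int.toNat_of_nonneg (by omega)⟩
  obtain ⟨b, hb⟩ : ∃ b : ℕ, (b : ℤ) = n - j := ⟨_, Int.toNat_of_nonneg (by omega)⟩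
  dsimp only [Pi.div_apply]
  rw [show (n + j).toNat = a by omega, show (n - j).toNat = b by omega,
    show 2 * n = a + b by omega, ← ha, gaussBinom_add_eq_div hq]

theorem summable_natAbs_mul_pow_triangular {r : ℝ} (hr₀ : 0 ≤ r) (hr₁ : r < 1) :
    Summable fun j : ℤ => (j.natAbs : ℝ) * r ^ triangular j := by
  have hg : Summable fun n : ℕ => ((n : ℝ) + 1) * r ^ n := by
    simpa [add_mul] using (summable_pow_mul_geometric_of_norm_lt_one 1
      (by rwa [Real.norm_of_nonneg hr₀] : ‖r‖ < 1)).add (summable_geometric_of_lt_one hr₀ hr₁)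
  have hle : ∀ n : ℕ, r ^ triangular n ≤ r ^ n :=
    fun n => pow_le_pow_of_le_one hr₀ hr₁.le (le_triangular n)
  refine .of_nat_of_neg_add_one (hg.of_nonneg_of_le (fun _ => by positivity) fun n => ?_)
    (hg.of_nonneg_of_le (fun _ => by positivity) fun n => ?_)
  · rw [Int.natAbs_natCast]
    exact mul_le_mul (by linarith) (hle n) (by positivity) (by positivity)
  · rw [triangular_neg_add_one, show (-((n : ℤ) + 1)).natAbs = n + 1 by omega]
    push_cast
    exact mul_le_mul_of_nonneg_left (hle n) (by positivity)

theorem norm_intCast_mul_neg_one_zpow (j : ℤ) : ‖(j : ℂ) * (-1) ^ j‖ = j.natAbs := by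
  rw [norm_mul, norm_zpow, norm_neg, norm_one, one_zpow, mul_one, Complex.norm_intCast,
    Nat.cast_natAbs, Int.cast_abs]

theorem tendsto_tsum_intCast_mul_jacobiTerm (hq : ‖q‖ < 1) :
    Tendsto (fun n => ∑' j : ℤ, (j : ℂ) * jacobiTerm q n j) atTop
      (𝓝 (∑' j : ℤ, (j : ℂ) * (-1) ^ j * q ^ triangular j * (∏' i : ℕ, (1 - q ^ (i + 1)))⁻¹)) := by
  obtain ⟨C, hC⟩ := exists_norm_gaussBinom_le hq
  refine tendsto_tsum_of_dominated_convergence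
    ((summable_natAbs_mul_pow_triangular (norm_nonneg q) hq).mul_left C) (fun j => ?_)
    (.of_forall fun n j => ?_)
  · convert (tendsto_gaussBinom_two_mul hq j).const_mul ((j : ℂ) * (-1) ^ j * q ^ triangular j)
      using 2
    simp only [jacobiTerm]
    ring
  · rw [jacobiTerm, ← mul_assoc, ← mul_assoc, norm_mul, norm_mul, norm_intCast_mul_neg_one_zpow,
      norm_pow]
    calc (j.natAbs : ℝ) * ‖gaussBinom q (2 * n) (n + j)‖ * ‖q‖ ^ triangular j
        ≤ j.natAbs * C * ‖q‖ ^ triangular j := by gcongr; exact hC _ _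
      _ = C * (j.natAbs * ‖q‖ ^ triangular j) := by ring

theorem hasSum_intCast_mul_neg_one_zpow_mul_pow_triangular (hq₀ : q ≠ 0) (hq : ‖q‖ < 1) :
    HasSum (fun j : ℤ => (j : ℂ) * (-1) ^ j * q ^ triangular j)
      ((∏' i : ℕ, (1 - q ^ (i + 1))) ^ 3) := by
  set P := ∏' i : ℕ, (1 - q ^ (i + 1))
  have hsummable : Summable fun j : ℤ => (j : ℂ) * (-1) ^ j * q ^ triangular j :=
    .of_norm <| (summable_natAbs_mul_pow_triangular (norm_nonneg q) hq).congr fun j => by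
      rw [norm_mul, norm_intCast_mul_neg_one_zpow, norm_pow]
  have hfinite : ∀ n, ∑' j : ℤ, (j : ℂ) * jacobiTerm q (n + 1) j
      = qPochhammer q (n + 1) * qPochhammer q n := fun n => by
    rw [tsum_eq_finsum ((hasFiniteSupport_jacobiTerm _).fun_mul_right _),
      finsum_intCast_mul_jacobiTerm_succ hq₀]
  have hlim : Tendsto (fun n => ∑' j : ℤ, (j : ℂ) * jacobiTerm q (n + 1) j) atTop
      (𝓝 (P * P)) := by
    simp_rw [hfinite]
    exact ((tendsto_qPochhammer hq).comp (tendsto_add_atTop_nat 1)).mul (tendsto_qPochhammer hq)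
  have h := tendsto_nhds_unique
    ((tendsto_tsum_intCast_mul_jacobiTerm hq).comp (tendsto_add_atTop_nat 1)) hlim
  rw [tsum_mul_right, ← div_eq_mul_inv, div_eq_iff (tprod_one_sub_pow_succ_ne_zero hq)] at h
  convert hsummable.hasSum using 1
  rw [h]
  ring

theorem jacobi_identity (hq₀ : q ≠ 0) (hq : ‖q‖ < 1) :
    HasSum (fun n : ℕ => (-1) ^ n * (2 * n + 1 : ℂ) * q ^ triangular n)
      ((∏' i : ℕ, (1 - q ^ (i + 1))) ^ 3) := by
  convert (hasSum_intCast_mul_neg_one_zpow_mul_pow_triangular hq₀ hq).nat_add_neg_add_one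
    using 2 with n
  rw [triangular_neg_add_one, zpow_neg, ← Int.natCast_succ, zpow_natCast, zpow_natCast,
    ← inv_pow, inv_neg, inv_one, pow_succ]
  push_cast
  ring

end Analytic

open Real

theorem kronNeg4_two_mul_add_one (m : ℕ) : kronNeg4 (2 * m + 1) = (-1) ^ m := by
  rcases Nat.even_or_odd m with ⟨l, rfl⟩ | ⟨l, rfl⟩
  · rw [kronNeg4, if_pos (by push_cast; omega), Even.neg_one_pow ⟨l, rfl⟩]
  · rw [kronNeg4, if_neg (by push_cast; omega), if_pos (by push_cast; omega),
      Odd.neg_one_pow ⟨l, rfl⟩]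

theorem kronNeg4_two_mul (m : ℤ) : kronNeg4 (2 * m) = 0 := by
  rw [kronNeg4, if_neg (by omega), if_neg (by omega)]

theorem cexp_mul_two_mul_add_one_sq (τ : ℂ) (m : ℕ) :
    cexp (π * I * τ * (2 * m + 1) ^ 2 / 4)
      = cexp (π * I * τ / 4) * cexp (2 * π * I * τ) ^ triangular m := by
  have h : 2 * (triangular m : ℂ) = m * (m + 1) := by exact_mod_cast two_mul_natCast_triangular m
  rw [← Complex.exp_nat_mul, ← Complex.exp_add]
  congr 1
  linear_combination (-(π * I * τ)) * h

/-- Euler–Jacobi identity: `η(τ)³ = ∑_{n > 0} (−4/n) · n · q^{n²/8}`. -/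
theorem dedekindEta_pow_three (τ : ℂ) (hτ : 0 < τ.im) :
    dedekindEta τ ^ 3 =
      ∑' n : ℕ, (kronNeg4 (n + 1) : ℂ) * (n + 1) *
        Complex.exp (Real.pi * Complex.I * τ * ((n : ℂ) + 1) ^ 2 / 4) := by
  have hq : ‖cexp (2 * π * I * τ)‖ < 1 := UpperHalfPlane.norm_exp_two_pi_I_lt_one ⟨τ, hτ⟩
  have hη : dedekindEta τ ^ 3
      = cexp (π * I * τ / 4) * (∏' n : ℕ, (1 - cexp (2 * π * I * τ) ^ (n + 1))) ^ 3 := by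
    rw [dedekindEta, mul_pow, ← Complex.exp_nat_mul]
    ring_nf
  refine hη.trans ((add_zero _).symm.trans (HasSum.tsum_eq ?_).symm)
  refine .even_add_odd (((jacobi_identity (exp_ne_zero _) hq).mul_left _).congr_fun fun m => ?_)
    (hasSum_zero.congr_fun fun m => ?_)
  · push_cast
    rw [kronNeg4_two_mul_add_one, cexp_mul_two_mul_add_one_sq]
    push_cast
    ring
  · push_cast
    rw [show 2 * (m : ℤ) + 1 + 1 = 2 * (m + 1) by ring, kronNeg4_two_mul]
    simp
end

section
/- A complete set of coset representatives of Γ₀(N)\M_N(m) is given by the matrices M_{f/e}·(a b; 0 d) where f/e runs over the cusps of Γ₀(N) (e | N, f mod gcd(e, N/e), gcd(e,f) = 1), ad = m with ae ≡ 0 mod N, and b runs mod h_e·d, where M_{f/e} ∈ SL₂(Z) has first column (f, e) and h_e = N/gcd(e², N). -/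
/-!
Every `A ∈ M_N(m)` factors as `A = U * !![a, b₀; 0, d]` with `U ∈ SL₂(ℤ)` (column Hermite form),
and `N ∣ a e` for `e = gcd(U₁₀, N)` because `N ∣ A₁₀ = a U₁₀`. The coset `Γ₀(N) U` contains a
matrix `σ` with first column `(f, e)`: its bottom row `(e, x)` only needs `x` prime to `e` in a
prescribed class modulo `N / e`. Finally `σ T^t σ⁻¹ ∈ Γ₀(N)` exactly when `N ∣ t e²`, i.e.
`h_e ∣ t`, which reduces `b₀` modulo `h_e d`.

Conversely, if two representatives lie in one coset, uniqueness of the Hermite form gives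
`σ = δ σ' T^w` with `δ ∈ Γ₀(N)`, `a = a'`, `d = d'` and `b' = b + w d`. Lower-left entries
modulo `N` then force `e = e'` and `f ≡ f'` modulo `gcd(e, N/e)`; when `σ = σ'`,
`δ = σ T^(-w) σ⁻¹ ∈ Γ₀(N)` gives `h_e d ∣ b' - b`.
-/

open scoped MatrixGroups
open Matrix ModularGroup CongruenceSubgroup

theorem Int.exists_isCoprime_add_mul {r n M : ℤ} (hM : M ≠ 0) (h : IsCoprime r (Int.gcd n M)) :
    ∃ k, IsCoprime (r + n * k) M := by
  classical
  set k : ℤ := ∏ p ∈ M.natAbs.primeFactors with ¬ ((p : ℕ) : ℤ) ∣ r, ((p : ℕ) : ℤ)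
  refine ⟨k, Int.isCoprime_iff_gcd_eq_one.mpr (Nat.coprime_of_dvd fun p hp hpx hpM => ?_)⟩
  rw [← Int.natCast_dvd] at hpx hpM
  have hp' : Prime (p : ℤ) := Nat.prime_iff_prime_int.mp hp
  by_cases hpr : (p : ℤ) ∣ r
  · rcases hp'.dvd_mul.mp ((dvd_add_right hpr).mp hpx) with hpn | hpk
    · exact hp'.not_isUnit (h.isUnit_of_dvd' hpr (Int.dvd_coe_gcd hpn hpM))
    · obtain ⟨q, hq, hpq⟩ := hp'.exists_mem_finset_dvd hpk
      rw [Finset.mem_filter, Nat.mem_primeFactors] at hq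
      rw [Int.natCast_dvd_natCast, Nat.prime_dvd_prime_iff_eq hp hq.1.1] at hpq
      exact hq.2 (hpq ▸ hpr)
  · have hpk : (p : ℤ) ∣ k := Finset.dvd_prod_of_mem _ <| Finset.mem_filter.mpr
      ⟨Nat.mem_primeFactors.mpr ⟨hp, Int.natCast_dvd.mp hpM, Int.natAbs_ne_zero.mpr hM⟩, hpr⟩
    exact hpr ((dvd_add_left (hpk.mul_left n)).mp hpx)

theorem CongruenceSubgroup.mem_Gamma0_iff_dvd {N : ℕ} {γ : SL(2, ℤ)} :
    γ ∈ Gamma0 N ↔ (N : ℤ) ∣ γ 1 0 := by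
  rw [Gamma0_mem, ZMod.intCast_zmod_eq_zero_iff_dvd]

theorem SL2_mul_inv_apply_one_zero {R : Type*} [CommRing R] (A B : SL(2, R)) :
    (A * B⁻¹) 1 0 = A 1 0 * B 1 1 - A 1 1 * B 1 0 := by
  simp only [Matrix.SpecialLinearGroup.coe_mul, Matrix.SpecialLinearGroup.coe_inv, adjugate_fin_two,
    mul_apply, Fin.sum_univ_two, of_apply, cons_val', cons_val_zero, cons_val_one, cons_val_fin_one]
  ring

theorem ModularGroup.coe_mul_T_zpow (A : SL(2, ℤ)) (w : ℤ) :
    ((A * T ^ w : SL(2, ℤ)) : Matrix (Fin 2) (Fin 2) ℤ) =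
      !![A 0 0, A 0 0 * w + A 0 1; A 1 0, A 1 0 * w + A 1 1] := by
  rw [Matrix.SpecialLinearGroup.coe_mul, coe_T_zpow, eta_fin_two (A : Matrix (Fin 2) (Fin 2) ℤ)]
  simp

theorem ModularGroup.mul_T_zpow_apply_zero (A : SL(2, ℤ)) (w : ℤ) (i : Fin 2) :
    (A * T ^ w) i 0 = A i 0 := by
  rw [coe_mul_T_zpow]
  fin_cases i <;> rfl

theorem ModularGroup.coe_T_zpow_mul_upperTriangular (w a b d : ℤ) :
    ((T ^ w : SL(2, ℤ)) : Matrix (Fin 2) (Fin 2) ℤ) * !![a, b; 0, d] = !![a, b + w * d; 0, d] := by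
  rw [coe_T_zpow, Matrix.mul_fin_two]
  simp [add_comm]

theorem ModularGroup.conj_T_zpow_apply_one_zero (σ : SL(2, ℤ)) (w : ℤ) :
    (σ * T ^ w * σ⁻¹) 1 0 = -(w * σ 1 0 ^ 2) := by
  rw [SL2_mul_inv_apply_one_zero, coe_mul_T_zpow]
  simp only [of_apply, cons_val', cons_val_zero, cons_val_one, empty_val', cons_val_fin_one]
  ring

theorem ModularGroup.conj_T_zpow_mem_Gamma0_iff {N : ℕ} (σ : SL(2, ℤ)) (w : ℤ) :
    σ * T ^ w * σ⁻¹ ∈ Gamma0 N ↔ (N : ℤ) ∣ w * σ 1 0 ^ 2 := by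
  rw [mem_Gamma0_iff_dvd, conj_T_zpow_apply_one_zero, dvd_neg]

theorem Int.natCast_dvd_mul_iff_div_gcd_dvd {N k : ℕ} (hN : N ≠ 0) (w : ℤ) :
    (N : ℤ) ∣ w * k ↔ ((N / Nat.gcd k N : ℕ) : ℤ) ∣ w := by
  have hg : 0 < Nat.gcd k N := Nat.gcd_pos_of_pos_right _ (Nat.pos_of_ne_zero hN)
  have hcop : IsCoprime ((N / Nat.gcd k N : ℕ) : ℤ) ((k / Nat.gcd k N : ℕ) : ℤ) :=
    Nat.isCoprime_iff_coprime.mpr (Nat.coprime_div_gcd_div_gcd hg).symm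
  have hk : (k : ℤ) = Nat.gcd k N * (k / Nat.gcd k N : ℕ) := by
    exact_mod_cast (Nat.mul_div_cancel' (Nat.gcd_dvd_left k N)).symm
  have hN' : (N : ℤ) = Nat.gcd k N * (N / Nat.gcd k N : ℕ) := by
    exact_mod_cast (Nat.mul_div_cancel' (Nat.gcd_dvd_right k N)).symm
  rw [hk, hN', mul_left_comm, mul_dvd_mul_iff_left (by exact_mod_cast hg.ne')]
  exact ⟨hcop.dvd_of_dvd_mul_right, fun h => h.mul_right _⟩

theorem exists_eq_SL2_mul_upperTriangular (A : Matrix (Fin 2) (Fin 2) ℤ) (hA : 0 < A.det) :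
    ∃ U : SL(2, ℤ), ∃ a d : ℕ, ∃ b : ℤ, A = U * !![(a : ℤ), b; 0, (d : ℤ)] := by
  set g := Int.gcd (A 0 0) (A 1 0)
  have hg : 0 < g := Int.gcd_pos_iff.mpr <| by
    by_contra! h0
    rw [det_fin_two, h0.1, h0.2] at hA
    simp at hA
  obtain ⟨U, hU0, hU1⟩ :=
    (Int.isCoprime_iff_gcd_eq_one.mpr (Int.gcd_div_gcd_div_gcd hg)).exists_SL2_col 0
  have hA0 : A 0 0 = g * U 0 0 := by rw [hU0, Int.mul_ediv_cancel' (Int.gcd_dvd_left _ _)]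
  have hA1 : A 1 0 = g * U 1 0 := by rw [hU1, Int.mul_ediv_cancel' (Int.gcd_dvd_right _ _)]
  have hdetU : U 0 0 * U 1 1 - U 0 1 * U 1 0 = 1 := by rw [← det_fin_two]; exact U.det_coe
  set d := U 0 0 * A 1 1 - U 1 0 * A 0 1
  have hAU : A = U * !![(g : ℤ), U 1 1 * A 0 1 - U 0 1 * A 1 1; 0, d] := by
    ext i j
    fin_cases i <;> fin_cases j <;>
      simp only [Fin.zero_eta, Fin.mk_one, Fin.isValue, mul_apply, Fin.sum_univ_two, of_apply,
        cons_val', cons_val_zero, cons_val_one, cons_val_fin_one, mul_zero, add_zero]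
    · rw [hA0, mul_comm]
    · linear_combination (-A 0 1) * hdetU
    · rw [hA1, mul_comm]
    · linear_combination (-A 1 1) * hdetU
  have hdet : A.det = g * d := by
    rw [hAU, det_mul, U.det_coe, one_mul, det_fin_two_of, mul_zero, sub_zero]
  have hd : 0 ≤ d := (pos_of_mul_pos_right (hdet ▸ hA) (by positivity)).le
  exact ⟨U, g, d.toNat, _, by rwa [Int.toNat_of_nonneg hd]⟩

theorem CongruenceSubgroup.exists_mem_Gamma0_eq_mul_gcd {N : ℕ} (hN : N ≠ 0) (U : SL(2, ℤ)) :
    ∃ γ ∈ Gamma0 N, ∃ σ : SL(2, ℤ), σ 1 0 = Int.gcd (U 1 0) N ∧ U = γ * σ := by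
  set e : ℤ := (Int.gcd (U 1 0) N : ℤ)
  have he : e ≠ 0 := Int.natCast_ne_zero.mpr (Int.gcd_ne_zero_right (by exact_mod_cast hN))
  have hc : U 1 0 = e * (U 1 0 / e) := (Int.mul_ediv_cancel' (Int.gcd_dvd_left _ _)).symm
  have hn : (N : ℤ) = e * (N / e) := (Int.mul_ediv_cancel' (Int.gcd_dvd_right _ _)).symm
  obtain ⟨u, v, huv⟩ : IsCoprime (U 1 0 / e) (N / e) := Int.isCoprime_iff_gcd_eq_one.mpr
    (Int.gcd_div_gcd_div_gcd (Int.gcd_pos_of_ne_zero_right _ (by exact_mod_cast hN)))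
  set c := U 1 0 / e
  set n := (N : ℤ) / e
  -- `σ` gets bottom row `(e, x)` with `x ≡ u * U 1 1 (mod n)` and `x` prime to `e`, so that
  -- `(U * σ⁻¹) 1 0 = e * (c * x - U 1 1)` is divisible by `e * n = N`.
  have hu : IsCoprime u (Int.gcd n e) :=
    IsCoprime.of_isCoprime_of_dvd_right ⟨c, v, by linear_combination huv⟩ (Int.gcd_dvd_left _ _)
  have hα : IsCoprime (U 1 1) (Int.gcd n e) :=
    ((U.isCoprime_row 1).symm.of_isCoprime_of_dvd_right ⟨c, hc⟩).of_isCoprime_of_dvd_right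
      (Int.gcd_dvd_right _ _)
  obtain ⟨k, hk⟩ := Int.exists_isCoprime_add_mul he (hu.mul_left hα)
  obtain ⟨σ, hσ0, hσ1⟩ := hk.symm.exists_SL2_row 1
  refine ⟨U * σ⁻¹, ?_, σ, hσ0, by group⟩
  rw [mem_Gamma0_iff_dvd, SL2_mul_inv_apply_one_zero, hσ0, hσ1]
  exact ⟨c * k - U 1 1 * v, by
    linear_combination e * U 1 1 * huv + (u * U 1 1 + n * k) * hc - (c * k - U 1 1 * v) * hn⟩

theorem exists_T_zpow_of_mul_upperTriangular_eq {σ τ : SL(2, ℤ)} {a d a' d' : ℕ} {b b' : ℤ}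
    (ha : 0 < a)
    (h : (σ : Matrix (Fin 2) (Fin 2) ℤ) * !![(a : ℤ), b; 0, (d : ℤ)] =
      (τ : Matrix (Fin 2) (Fin 2) ℤ) * !![(a' : ℤ), b'; 0, (d' : ℤ)]) :
    ∃ w : ℤ, σ = τ * T ^ w ∧ a = a' ∧ d = d' ∧ b' = b + w * d := by
  set W := τ⁻¹ * σ
  have hW : (W : Matrix (Fin 2) (Fin 2) ℤ) * !![(a : ℤ), b; 0, (d : ℤ)] =
      !![(a' : ℤ), b'; 0, (d' : ℤ)] := by
    rw [Matrix.SpecialLinearGroup.coe_mul, mul_assoc, h, ← mul_assoc,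
      ← Matrix.SpecialLinearGroup.coe_mul, inv_mul_cancel, Matrix.SpecialLinearGroup.coe_one,
      one_mul]
  have h00 := congrFun₂ hW 0 0
  have h10 := congrFun₂ hW 1 0
  have h01 := congrFun₂ hW 0 1
  have h11 := congrFun₂ hW 1 1
  simp only [mul_apply, Fin.sum_univ_two, of_apply, cons_val', cons_val_zero, cons_val_one,
    cons_val_fin_one, mul_zero, add_zero, mul_eq_zero, Int.natCast_eq_zero] at h00 h10 h01 h11
  have hdet : W 0 0 * W 1 1 - W 0 1 * W 1 0 = 1 := by rw [← det_fin_two]; exact W.det_coe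
  have hW10 : W 1 0 = 0 := h10.resolve_right ha.ne'
  rw [hW10, mul_zero, sub_zero] at hdet
  obtain ⟨hW00, hW11⟩ : W 0 0 = 1 ∧ W 1 1 = 1 := by
    rcases Int.eq_one_or_neg_one_of_mul_eq_one' hdet with h1 | ⟨hneg, -⟩
    · exact h1
    · rw [hneg] at h00; omega
  have hWT : W = T ^ W 0 1 := by
    ext i j
    fin_cases i <;> fin_cases j <;> simp [coe_T_zpow, hW00, hW10, hW11]
  refine ⟨W 0 1, by rw [← hWT]; simp [W], ?_, ?_, ?_⟩
  · simpa [hW00] using h00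
  · simpa [hW10, hW11] using h11
  · rw [← h01, hW00, one_mul]

theorem CongruenceSubgroup.dvd_mul_apply_one_zero_of_mem_Gamma0 {N : ℕ} {ε : SL(2, ℤ)}
    (hε : ε ∈ Gamma0 N) (A : SL(2, ℤ)) (hA : A 1 0 ∣ N) : A 1 0 ∣ (ε * A) 1 0 := by
  have hNε := mem_Gamma0_iff_dvd.mp hε
  simp only [Matrix.SpecialLinearGroup.coe_mul, mul_apply, Fin.sum_univ_two]
  exact dvd_add ((hA.trans hNε).mul_right _) (dvd_mul_left _ _)

theorem CongruenceSubgroup.mul_apply_zero_zero_modEq_of_mem_Gamma0 {N e : ℕ} {ε : SL(2, ℤ)}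
    (hε : ε ∈ Gamma0 N) (he : 0 < e) (heN : e ∣ N) {A : SL(2, ℤ)} (hA : A 1 0 = e)
    (hεA : (ε * A) 1 0 = e) : (ε * A) 0 0 ≡ A 0 0 [ZMOD Nat.gcd e (N / e)] := by
  obtain ⟨t, ht⟩ := mem_Gamma0_iff_dvd.mp hε
  have hN : (N : ℤ) = e * (N / e : ℕ) := by exact_mod_cast (Nat.mul_div_cancel' heN).symm
  have hdet : ε 0 0 * ε 1 1 - ε 0 1 * ε 1 0 = 1 := by rw [← det_fin_two]; exact ε.det_coe
  simp only [Matrix.SpecialLinearGroup.coe_mul, mul_apply, Fin.sum_univ_two, hA] at hεA ⊢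
  have h11 : 1 - ε 1 1 = (N / e : ℕ) * (t * A 0 0) := by
    apply mul_left_cancel₀ (Int.natCast_ne_zero.mpr he.ne')
    linear_combination -hεA + A 0 0 * ht + t * A 0 0 * hN
  have hsub : ε 0 0 * A 0 0 + ε 0 1 * e - A 0 0 =
      (N / e : ℕ) * (t * A 0 0 * (ε 0 0 * A 0 0 + ε 0 1 * e)) + e * ε 0 1 := by
    linear_combination
      A 0 0 * hdet + ε 0 0 * A 0 0 * h11 + ε 0 1 * A 0 0 * ht + ε 0 1 * A 0 0 * t * hN
  refine (Int.modEq_iff_dvd.mpr ?_).symm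
  rw [hsub]
  exact dvd_add (dvd_mul_of_dvd_left (by exact_mod_cast Nat.gcd_dvd_right _ _) _)
    (dvd_mul_of_dvd_left (by exact_mod_cast Nat.gcd_dvd_left _ _) _)

theorem exists_mem_Gamma0_reduce_upper_right {N e : ℕ} (hN : N ≠ 0) {σ : SL(2, ℤ)}
    (hσ : σ 1 0 = e) (a b₀ : ℤ) {d : ℕ} (hd : 0 < d) :
    ∃ δ ∈ Gamma0 N, ∃ b : ℕ, b < N / Nat.gcd (e ^ 2) N * d ∧
      (σ : Matrix (Fin 2) (Fin 2) ℤ) * !![a, b₀; 0, (d : ℤ)] =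
        (δ : Matrix (Fin 2) (Fin 2) ℤ) * σ * !![a, (b : ℤ); 0, (d : ℤ)] := by
  set h := N / Nat.gcd (e ^ 2) N
  have hhd : (0 : ℤ) < h * d := by
    have := Nat.div_pos (Nat.gcd_le_right _ (Nat.pos_of_ne_zero hN))
      (Nat.gcd_pos_of_pos_right (e ^ 2) (Nat.pos_of_ne_zero hN))
    positivity
  set q := b₀ / (h * d)
  have hconj : σ * T ^ (h * q) * σ⁻¹ ∈ Gamma0 N := by
    rw [conj_T_zpow_mem_Gamma0_iff, hσ, ← Nat.cast_pow, Int.natCast_dvd_mul_iff_div_gcd_dvd hN]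
    exact dvd_mul_right _ _
  have hb := Int.emod_nonneg b₀ hhd.ne'
  refine ⟨σ * T ^ (h * q) * σ⁻¹, hconj, (b₀ % (h * d)).toNat, ?_, ?_⟩
  · rw [← Nat.cast_lt (α := ℤ), Int.toNat_of_nonneg hb, Nat.cast_mul]
    exact Int.emod_lt_of_pos b₀ hhd
  · rw [← Matrix.SpecialLinearGroup.coe_mul, inv_mul_cancel_right,
      Matrix.SpecialLinearGroup.coe_mul, mul_assoc, coe_T_zpow_mul_upperTriangular,
      Int.toNat_of_nonneg hb]
    congr
    linear_combination (Int.emod_add_mul_ediv b₀ (h * d)).symm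

theorem exists_Gamma0_coset_rep {N m : ℕ} (hN : N ≠ 0) (hm : 0 < m)
    (A : Matrix (Fin 2) (Fin 2) ℤ) (hA : A.det = m) (hNA : (N : ℤ) ∣ A 1 0) :
    ∃ γ ∈ Gamma0 N, ∃ σ : SL(2, ℤ), ∃ e a d b : ℕ, ∃ f : ℤ,
      (σ 0 0 : ℤ) = f ∧ (σ 1 0 : ℤ) = e ∧ e ∣ N ∧ 0 < e ∧ IsCoprime f (e : ℤ) ∧
      a * d = m ∧ N ∣ a * e ∧ b < (N / Nat.gcd (e ^ 2) N) * d ∧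
      A = (γ : Matrix (Fin 2) (Fin 2) ℤ) * (σ : Matrix (Fin 2) (Fin 2) ℤ) *
        !![(a : ℤ), (b : ℤ); 0, (d : ℤ)] := by
  obtain ⟨U, a, d, b₀, rfl⟩ :=
    exists_eq_SL2_mul_upperTriangular A (by rw [hA]; exact_mod_cast hm)
  have had : a * d = m := by
    rw [det_mul, U.det_coe, one_mul, det_fin_two_of, mul_zero, sub_zero] at hA
    exact_mod_cast hA
  set e := Int.gcd (U 1 0) N
  have hNae : N ∣ a * e := by
    have hNA' : (N : ℤ) ∣ a * U 1 0 := by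
      simpa [mul_apply, Fin.sum_univ_two, mul_comm] using hNA
    have := Int.dvd_coe_gcd hNA' (dvd_mul_left (N : ℤ) a)
    rw [Int.gcd_mul_left, Int.natAbs_natCast] at this
    exact_mod_cast this
  obtain ⟨γ, hγ, σ, hσ, rfl⟩ := exists_mem_Gamma0_eq_mul_gcd hN U
  obtain ⟨δ, hδ, b, hb, hσδ⟩ :=
    exists_mem_Gamma0_reduce_upper_right hN hσ a b₀ (Nat.pos_of_mul_pos_left (had ▸ hm))
  refine ⟨γ * δ, mul_mem hγ hδ, σ, e, a, d, b, σ 0 0, rfl, hσ, Nat.gcd_dvd_right _ _,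
    Int.gcd_pos_of_ne_zero_right _ (by exact_mod_cast hN), hσ ▸ σ.isCoprime_col 0, had, hNae, hb,
    ?_⟩
  simp only [Matrix.SpecialLinearGroup.coe_mul, mul_assoc] at hσδ ⊢
  rw [hσδ]

theorem Gamma0_coset_rep_unique {N : ℕ} (hN : N ≠ 0) {σ σ' δ : SL(2, ℤ)}
    {e a d b e' a' d' b' : ℕ} (hσ : σ 1 0 = e) (he : 0 < e) (heN : e ∣ N)
    (hσ' : σ' 1 0 = e') (he'N : e' ∣ N) (ha : 0 < a)
    (hb : b < N / Nat.gcd (e ^ 2) N * d) (hb' : b' < N / Nat.gcd (e' ^ 2) N * d')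
    (hδ : δ ∈ Gamma0 N)
    (h : (σ : Matrix (Fin 2) (Fin 2) ℤ) * !![(a : ℤ), (b : ℤ); 0, (d : ℤ)] =
      (δ : Matrix (Fin 2) (Fin 2) ℤ) * σ' * !![(a' : ℤ), (b' : ℤ); 0, (d' : ℤ)]) :
    e = e' ∧ a = a' ∧ d = d' ∧ σ 0 0 ≡ σ' 0 0 [ZMOD Nat.gcd e (N / e)] ∧ (σ = σ' → b = b') := by
  rw [← Matrix.SpecialLinearGroup.coe_mul] at h
  obtain ⟨w, hσw, rfl, rfl, hbb'⟩ := exists_T_zpow_of_mul_upperTriangular_eq ha h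
  rw [mul_assoc] at hσw
  have hτ1 : (σ' * T ^ w) 1 0 = e' := by rw [mul_T_zpow_apply_zero, hσ']
  have hee' : e = e' := by
    have h1 := dvd_mul_apply_one_zero_of_mem_Gamma0 (inv_mem hδ) σ
      (by rw [hσ]; exact_mod_cast heN)
    have h2 := dvd_mul_apply_one_zero_of_mem_Gamma0 hδ (σ' * T ^ w)
      (by rw [hτ1]; exact_mod_cast he'N)
    rw [hσ, hσw, inv_mul_cancel_left, hτ1] at h1
    rw [← hσw, hτ1, hσ] at h2
    exact Nat.dvd_antisymm (by exact_mod_cast h1) (by exact_mod_cast h2)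
  subst hee'
  refine ⟨rfl, rfl, rfl, ?_, fun hσσ' => ?_⟩
  · have := mul_apply_zero_zero_modEq_of_mem_Gamma0 hδ he heN hτ1 (by rw [← hσw, hσ])
    rwa [← hσw, mul_T_zpow_apply_zero] at this
  · subst hσσ'
    have hδ' : δ = σ * T ^ (-w) * σ⁻¹ := by
      calc δ = δ * σ * T ^ w * (T ^ w)⁻¹ * σ⁻¹ := by group
        _ = σ * T ^ (-w) * σ⁻¹ := by rw [mul_assoc δ, ← hσw, _root_.zpow_neg]
    rw [hδ', conj_T_zpow_mem_Gamma0_iff, hσ, ← Nat.cast_pow,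
      Int.natCast_dvd_mul_iff_div_gcd_dvd hN, dvd_neg] at hδ
    refine Nat.ModEq.eq_of_lt_of_lt (Nat.modEq_iff_dvd.mpr ?_) hb hb'
    rw [hbb', add_sub_cancel_left, Nat.cast_mul]
    exact mul_dvd_mul_right hδ _

/-- A complete set of coset representatives of `Γ₀(N)\M_N(m)` (where
`M_N(m)` is the set of integral `2×2` matrices of determinant `m` whose lower-left
entry is divisible by `N`) is given by the matrices `M_{f/e}·(a b; 0 d)`, where
`f/e` runs over the cusps of `Γ₀(N)` (`e ∣ N`, `gcd(e,f) = 1`, `f mod gcd(e, N/e)`),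
`M_{f/e} ∈ SL₂(ℤ)` has first column `(f, e)`, `ad = m` with `ae ≡ 0 mod N`, and
`b` runs mod `h_e·d` with `h_e = N/gcd(e², N)`. -/
theorem Gamma0_MNm_coset_decomposition (N m : ℕ) (hN : 0 < N) (hm : 0 < m) :
    -- every element of `M_N(m)` lies in one of these cosets
    (∀ A : Matrix (Fin 2) (Fin 2) ℤ, A.det = m → (N : ℤ) ∣ A 1 0 →
      ∃ γ ∈ CongruenceSubgroup.Gamma0 N, ∃ σ : SL(2, ℤ), ∃ e a d b : ℕ, ∃ f : ℤ,
        (σ 0 0 : ℤ) = f ∧ (σ 1 0 : ℤ) = e ∧ e ∣ N ∧ 0 < e ∧ IsCoprime f (e : ℤ) ∧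
        a * d = m ∧ N ∣ a * e ∧ b < (N / Nat.gcd (e ^ 2) N) * d ∧
        A = (γ : Matrix (Fin 2) (Fin 2) ℤ) * (σ : Matrix (Fin 2) (Fin 2) ℤ) *
              !![(a : ℤ), (b : ℤ); 0, (d : ℤ)]) ∧
    -- distinct parameters give distinct cosets
    (∀ (σ σ' : SL(2, ℤ)) (e a d b e' a' d' b' : ℕ) (f f' : ℤ),
      ((σ 0 0 : ℤ) = f ∧ (σ 1 0 : ℤ) = e ∧ e ∣ N ∧ 0 < e ∧ IsCoprime f (e : ℤ) ∧
        a * d = m ∧ N ∣ a * e ∧ b < (N / Nat.gcd (e ^ 2) N) * d) →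
      ((σ' 0 0 : ℤ) = f' ∧ (σ' 1 0 : ℤ) = e' ∧ e' ∣ N ∧ 0 < e' ∧ IsCoprime f' (e' : ℤ) ∧
        a' * d' = m ∧ N ∣ a' * e' ∧ b' < (N / Nat.gcd (e' ^ 2) N) * d') →
      (∃ δ ∈ CongruenceSubgroup.Gamma0 N,
        (σ : Matrix (Fin 2) (Fin 2) ℤ) * !![(a : ℤ), (b : ℤ); 0, (d : ℤ)] =
          (δ : Matrix (Fin 2) (Fin 2) ℤ) * (σ' : Matrix (Fin 2) (Fin 2) ℤ) *
            !![(a' : ℤ), (b' : ℤ); 0, (d' : ℤ)]) →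
      e = e' ∧ a = a' ∧ d = d' ∧ f ≡ f' [ZMOD Nat.gcd e (N / e)] ∧ (σ = σ' → b = b')) := by
  refine ⟨exists_Gamma0_coset_rep hN.ne' hm, ?_⟩
  rintro σ σ' e a d b e' a' d' b' f f' ⟨rfl, hσ, heN, he, -, had, -, hb⟩
    ⟨rfl, hσ', he'N, -, -, -, -, hb'⟩ ⟨δ, hδ, h⟩
  exact Gamma0_coset_rep_unique hN.ne' hσ he heN hσ' he'N (Nat.pos_of_mul_pos_right (had ▸ hm))
    hb hb' hδ h
end

section
/- For the quasi-modular Eisenstein series G₂(τ) = −1/24 + ∑_{n ≥ 1} σ₁(n) qⁿ and any nearly holomorphic modular form f of weight 2 for SL₂(Z) (a meromorphic modular form holomorphic on the upper half-plane with a pole of finite order at the cusp), the constant term of the Fourier expansion of f is zero. -/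
open scoped MatrixGroups
open Complex

/-! Integrating the Fourier expansion term by term gives a primitive `F` of `f` on the upper
half-plane with `F (τ + 1) = F τ + c 0`. Weight `2` under `S` says exactly that `τ ↦ F (-1/τ)`
is again a primitive of `f`, so `F (-1/τ) - F τ` is constant, and it vanishes at the fixed point
`τ = i`. Evaluating at `ρ + 1`, where `ρ = e^{2πi/3}` satisfies `-1/(ρ + 1) = ρ`, gives
`F ρ = F (ρ + 1) = F ρ + c 0`. -/

open Real
open UpperHalfPlane (upperHalfPlaneSet isOpen_upperHalfPlaneSet ρ ρ_sq)

lemma one_le_norm_two_pi_I_mul_intCast {n : ℤ} (hn : n ≠ 0) : 1 ≤ ‖2 * π * I * n‖ := by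
  have hn' : (1 : ℝ) ≤ |(n : ℝ)| := by exact_mod_cast Int.one_le_abs hn
  have hnorm : ‖2 * π * I * n‖ = 2 * π * |(n : ℝ)| := by
    simp [Complex.norm_intCast, abs_of_pos pi_pos]
  nlinarith [pi_gt_three]

lemma norm_cexp_two_pi_I_int_mul_le (n : ℤ) {σ τ₁ τ₂ : ℂ} (h₁ : τ₁.im ≤ σ.im)
    (h₂ : σ.im ≤ τ₂.im) :
    ‖cexp (2 * π * I * n * σ)‖ ≤ ‖cexp (2 * π * I * n * τ₁)‖ + ‖cexp (2 * π * I * n * τ₂)‖ := by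
  have hre : ∀ z : ℂ, (2 * π * I * n * z).re = -(2 * π * n * z.im) := fun z => by simp
  simp only [Complex.norm_exp, hre]
  rcases le_total 0 (2 * π * n : ℝ) with h | h
  · exact le_add_of_le_of_nonneg (Real.exp_le_exp.2 (by nlinarith)) (Real.exp_pos _).le
  · exact le_add_of_nonneg_of_le (Real.exp_pos _).le (Real.exp_le_exp.2 (by nlinarith))

section FourierPrimitive

variable (a : ℤ → ℂ)

noncomputable def fourierPrimitiveTerm (n : ℤ) (τ : ℂ) : ℂ :=
  if n = 0 then a 0 * τ else a n / (2 * π * I * n) * cexp (2 * π * I * n * τ)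

noncomputable def fourierPrimitive (τ : ℂ) : ℂ :=
  ∑' n, fourierPrimitiveTerm a n τ

lemma hasDerivAt_fourierPrimitiveTerm (n : ℤ) (τ : ℂ) :
    HasDerivAt (fourierPrimitiveTerm a n) (a n * cexp (2 * π * I * n * τ)) τ := by
  by_cases hn : n = 0
  · subst hn
    have heq : fourierPrimitiveTerm a 0 = fun τ => a 0 * τ := by
      funext τ; simp [fourierPrimitiveTerm]
    simpa [heq] using (hasDerivAt_id τ).const_mul (a 0)
  · have hk : (2 * π * I * n : ℂ) ≠ 0 := by simp [pi_ne_zero, hn]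
    have heq : fourierPrimitiveTerm a n =
        fun τ => a n / (2 * π * I * n) * cexp (2 * π * I * n * τ) := by
      funext τ; simp [fourierPrimitiveTerm, hn]
    rw [heq]
    refine ((((hasDerivAt_id τ).const_mul (2 * π * I * n)).cexp).const_mul
      (a n / (2 * π * I * n))).congr_deriv ?_
    field_simp
    simp

lemma norm_fourierPrimitiveTerm_le (n : ℤ) (τ : ℂ) :
    ‖fourierPrimitiveTerm a n τ‖ ≤ (1 + ‖τ‖) * ‖a n * cexp (2 * π * I * n * τ)‖ := by
  by_cases hn : n = 0
  · subst hn
    simp only [fourierPrimitiveTerm, if_true, Int.cast_zero, mul_zero, zero_mul, Complex.exp_zero,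
      mul_one, norm_mul]
    nlinarith [norm_nonneg (a 0), norm_nonneg τ]
  · rw [fourierPrimitiveTerm, if_neg hn, norm_mul, norm_div, norm_mul (a n)]
    calc ‖a n‖ / ‖2 * π * I * n‖ * ‖cexp (2 * π * I * n * τ)‖
        ≤ ‖a n‖ * ‖cexp (2 * π * I * n * τ)‖ := by
          gcongr
          exact div_le_self (norm_nonneg _) (one_le_norm_two_pi_I_mul_intCast hn)
      _ ≤ (1 + ‖τ‖) * (‖a n‖ * ‖cexp (2 * π * I * n * τ)‖) :=
          le_mul_of_one_le_left (by positivity) (by linarith [norm_nonneg τ])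

lemma summable_fourierPrimitiveTerm {τ : ℂ}
    (hs : Summable fun n : ℤ => a n * cexp (2 * π * I * n * τ)) :
    Summable fun n => fourierPrimitiveTerm a n τ :=
  .of_norm_bounded (hs.norm.mul_left _) (norm_fourierPrimitiveTerm_le a · τ)

lemma fourierPrimitive_add_one {τ : ℂ}
    (hs : Summable fun n : ℤ => a n * cexp (2 * π * I * n * τ)) :
    fourierPrimitive a (τ + 1) = fourierPrimitive a τ + a 0 := by
  have hterm : ∀ n, fourierPrimitiveTerm a n (τ + 1) =
      fourierPrimitiveTerm a n τ + if n = 0 then a 0 else 0 := by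
    intro n
    by_cases hn : n = 0
    · simp [fourierPrimitiveTerm, hn, mul_add]
    · have hperiod : cexp (2 * π * I * n) = 1 := by
        simpa [mul_comm] using Complex.exp_int_mul_two_pi_mul_I n
      simp [fourierPrimitiveTerm, hn, mul_add, Complex.exp_add, hperiod]
  rw [fourierPrimitive, fourierPrimitive, tsum_congr hterm,
    (summable_fourierPrimitiveTerm a hs).tsum_add (summable_of_ne_finset_zero (s := {0})
      (by simp +contextual)), tsum_ite_eq]

/-- On the upper half-plane the series may be differentiated term by term: on a horizontal strip
around `τ` every term is dominated by its values on the two boundary lines. -/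
lemma hasDerivAt_fourierPrimitive
    (hs : ∀ τ : ℂ, 0 < τ.im → Summable fun n : ℤ => a n * cexp (2 * π * I * n * τ))
    {τ : ℂ} (hτ : 0 < τ.im) :
    HasDerivAt (fourierPrimitive a) (∑' n : ℤ, a n * cexp (2 * π * I * n * τ)) τ := by
  set τ₁ := τ - (τ.im / 2 : ℝ) * I
  set τ₂ := τ + (τ.im : ℝ) * I
  have him₁ : τ₁.im = τ.im / 2 := by simp [τ₁]; ring
  have him₂ : τ₂.im = 2 * τ.im := by simp [τ₂]; ring
  let strip : Set ℂ := {σ | τ₁.im < σ.im} ∩ {σ | σ.im < τ₂.im}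
  have hstrip : IsOpen strip :=
    (isOpen_lt continuous_const continuous_im).inter (isOpen_lt continuous_im continuous_const)
  have hτ_mem : τ ∈ strip := ⟨show τ₁.im < τ.im by linarith, show τ.im < τ₂.im by linarith⟩
  have hbound : ∀ n, ∀ σ ∈ strip, ‖a n * cexp (2 * π * I * n * σ)‖ ≤
      ‖a n * cexp (2 * π * I * n * τ₁)‖ + ‖a n * cexp (2 * π * I * n * τ₂)‖ := by
    intro n σ ⟨h₁, h₂⟩
    simp only [norm_mul, ← mul_add]
    gcongr
    exact norm_cexp_two_pi_I_int_mul_le n h₁.le h₂.le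
  exact hasDerivAt_tsum_of_isPreconnected
    ((hs τ₁ (by linarith)).norm.add (hs τ₂ (by linarith)).norm) hstrip
    ((convex_halfSpace_im_gt _).inter (convex_halfSpace_im_lt _)).isPreconnected
    (fun n σ _ => hasDerivAt_fourierPrimitiveTerm a n σ) hbound hτ_mem
    (summable_fourierPrimitiveTerm a (hs τ hτ)) hτ_mem

end FourierPrimitive

lemma eqOn_comp_neg_inv_of_hasDerivAt {F f : ℂ → ℂ}
    (hF : ∀ τ : ℂ, 0 < τ.im → HasDerivAt F (f τ) τ)
    (hS : ∀ τ : ℂ, 0 < τ.im → f (-τ⁻¹) = τ ^ 2 * f τ) :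
    Set.EqOn (fun τ => F (-τ⁻¹)) F upperHalfPlaneSet := by
  have hG : ∀ τ : ℂ, 0 < τ.im → HasDerivAt (fun τ => F (-τ⁻¹)) (f τ) τ := by
    intro τ hτ
    have hτ0 : τ ≠ 0 := fun h => by simp [h] at hτ
    have him : 0 < (-τ⁻¹).im := by
      simpa [inv_neg] using UpperHalfPlane.im_inv_neg_coe_pos ⟨τ, hτ⟩
    have h := (hF _ him).comp τ (hasDerivAt_inv hτ0).fun_neg
    rwa [hS τ hτ, neg_neg, mul_comm (τ ^ 2), mul_inv_cancel_right₀ (pow_ne_zero 2 hτ0)] at h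
  exact isOpen_upperHalfPlaneSet.eqOn_of_deriv_eq (convex_halfSpace_im_gt 0).isPreconnected
    (fun τ hτ => (hG τ hτ).differentiableAt.differentiableWithinAt)
    (fun τ hτ => (hF τ hτ).differentiableAt.differentiableWithinAt)
    (fun τ hτ => (hG τ hτ).deriv.trans (hF τ hτ).deriv.symm)
    (x := I) (by simp) (by simp [Complex.inv_I])

lemma neg_inv_rho_add_one : -((ρ : ℂ) + 1)⁻¹ = ρ := by
  rw [neg_eq_iff_eq_neg]
  exact inv_eq_of_mul_eq_one_right (by linear_combination -ρ_sq)

theorem constant_term_eq_zero_of_weakly_holomorphic_weight_two_general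
    (f : ℂ → ℂ)
    (hmod : ∀ γ : SL(2, ℤ), ∀ τ : ℂ, 0 < τ.im →
      f ((((γ 0 0 : ℤ) : ℂ) * τ + ((γ 0 1 : ℤ) : ℂ)) /
          (((γ 1 0 : ℤ) : ℂ) * τ + ((γ 1 1 : ℤ) : ℂ))) =
        (((γ 1 0 : ℤ) : ℂ) * τ + ((γ 1 1 : ℤ) : ℂ)) ^ 2 * f τ)
    (c : ℤ → ℂ)
    (hsum : ∀ τ : ℂ, 0 < τ.im →
      HasSum (fun n : ℤ => c n * Complex.exp (2 * Real.pi * Complex.I * n * τ)) (f τ)) :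
    c 0 = 0 := by
  have hs τ hτ := (hsum τ hτ).summable
  have hF : ∀ τ : ℂ, 0 < τ.im → HasDerivAt (fourierPrimitive c) (f τ) τ := fun τ hτ =>
    (hsum τ hτ).tsum_eq ▸ hasDerivAt_fourierPrimitive c hs hτ
  have hS : ∀ τ : ℂ, 0 < τ.im → f (-τ⁻¹) = τ ^ 2 * f τ := fun τ hτ => by
    have h := hmod ModularGroup.S τ hτ
    norm_num [ModularGroup.coe_S] at h
    rwa [neg_div, one_div] at h
  have hρ1 : 0 < ((ρ : ℂ) + 1).im := by simpa using ρ.im_pos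
  have h : fourierPrimitive c (-((ρ : ℂ) + 1)⁻¹) = fourierPrimitive c (ρ + 1) :=
    eqOn_comp_neg_inv_of_hasDerivAt hF hS hρ1
  rw [neg_inv_rho_add_one, fourierPrimitive_add_one c (hs _ ρ.im_pos)] at h
  linear_combination -h

/-- Any nearly holomorphic (weakly holomorphic) modular form of weight `2` for
`SL₂(ℤ)` — a holomorphic function on the upper half-plane transforming with weight
`2` and with a Fourier expansion `∑_{n ≥ −n₀} c(n) qⁿ` — has vanishing constant
Fourier coefficient: `c(0) = 0`. -/
theorem constant_term_eq_zero_of_weakly_holomorphic_weight_two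
    (f : ℂ → ℂ)
    (hol : DifferentiableOn ℂ f {τ : ℂ | 0 < τ.im})
    (hmod : ∀ γ : SL(2, ℤ), ∀ τ : ℂ, 0 < τ.im →
      f ((((γ 0 0 : ℤ) : ℂ) * τ + ((γ 0 1 : ℤ) : ℂ)) /
          (((γ 1 0 : ℤ) : ℂ) * τ + ((γ 1 1 : ℤ) : ℂ))) =
        (((γ 1 0 : ℤ) : ℂ) * τ + ((γ 1 1 : ℤ) : ℂ)) ^ 2 * f τ)
    (n₀ : ℕ) (c : ℤ → ℂ)
    (hc : ∀ n : ℤ, n < -(n₀ : ℤ) → c n = 0)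
    (hsum : ∀ τ : ℂ, 0 < τ.im →
      HasSum (fun n : ℤ => c n * Complex.exp (2 * Real.pi * Complex.I * n * τ)) (f τ)) :
    c 0 = 0 :=
  constant_term_eq_zero_of_weakly_holomorphic_weight_two_general f hmod c hsum
end
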